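/- arXiv:2604.21176 — 3 statements merged into one kernel-verified Lean document; each statement's English description precedes it below -/
import Mathlib

section
/- The covariant product a ⊙ b = a_{(1)} ⊗_{C∞(M)} ∇̂^•_{a_{(2)}} b makes A = C∞(⊗(TM)) a unital, associative, filtered ℝ-algebra (with unit the constant function 1, filtered by tensor order), and for every finite-dimensional vector bundle E → M with connection ∇, the map X ↦ ∇^•_X is a homomorphism of filtered ℝ-algebras from A to the ℝ-algebra of ℝ-linear endomorphisms of C∞(E) under composition; in particular C∞(E) is a left A-module. -/
/-!
Algebraic framework for manifolds with connection:
`R` plays the role of the ring of smooth functions `C^∞(M)`,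
`V` the `C^∞(M)`-module of smooth vector fields `C^∞(TM)`,
`VFAct` the action of vector fields on functions as derivations,
`Conn` a connection (covariant derivative) on the module of sections `E`
of a vector bundle, and `hcd` the higher covariant derivative defined
inductively by
`∇^{j+1}_{X₀,…,X_j} α = ∇_{X₀}(∇^j_{X₁,…,X_j} α) − Σ_k ∇^j_{X₁,…,∇̂_{X₀}X_k,…,X_j} α`.
-/

open TensorProduct

/-- The action of vector fields on smooth functions as (ℝ-linear) derivations. -/
structure VFAct (R : Type*) [CommRing R] [Algebra ℝ R]
    (V : Type*) [AddCommGroup V] [Module R V] where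
  act : V → R → R
  act_add_right : ∀ X f g, act X (f + g) = act X f + act X g
  act_mul_right : ∀ X f g, act X (f * g) = act X f * g + f * act X g
  act_add_left : ∀ X Y f, act (X + Y) f = act X f + act Y f
  act_smul_left : ∀ (f : R) X g, act (f • X) g = f * act X g
  act_algebraMap : ∀ X (r : ℝ), act X (algebraMap ℝ R r) = 0

/-- A connection (covariant derivative) on the `R = C^∞(M)`-module `E` of sections of a
smooth vector bundle, relative to the action `D` of vector fields on functions. -/
structure Conn (R : Type*) [CommRing R] [Algebra ℝ R]
    (V : Type*) [AddCommGroup V] [Module R V]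
    (E : Type*) [AddCommGroup E] [Module R E]
    (D : VFAct R V) where
  d : V → E → E
  d_add_right : ∀ X α β, d X (α + β) = d X α + d X β
  d_smul_right : ∀ X (f : R) α, d X (f • α) = D.act X f • α + f • d X α
  d_add_left : ∀ X Y α, d (X + Y) α = d X α + d Y α
  d_smul_left : ∀ (f : R) X α, d (f • X) α = f • d X α

variable {R : Type*} [CommRing R] [Algebra ℝ R]
variable {V : Type*} [AddCommGroup V] [Module R V]

/-- The higher covariant derivative `∇^j_{X₁,…,X_j}` along a tuple of vector fields,
defined inductively by
`∇^{j+1}_{X₀,…,X_j} α = ∇_{X₀}(∇^j_{X₁,…,X_j} α) − Σ_k ∇^j_{X₁,…,∇̂_{X₀}X_k,…,X_j} α`. -/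
def hcd {E : Type*} [AddCommGroup E] [Module R E] {D : VFAct R V}
    (cT : Conn R V V D) (cE : Conn R V E D) : (j : ℕ) → (Fin j → V) → E → E
  | 0, _, α => α
  | j + 1, X, α =>
      cE.d (X 0) (hcd cT cE j (fun k => X k.succ) α)
        - ∑ k : Fin j,
            hcd cT cE j (Function.update (fun m => X m.succ) k (cT.d (X 0) (X k.succ))) α

/-- The connection `∇̂` is torsion-free: `∇̂_X Y − ∇̂_Y X = [X,Y]`, where the Lie bracket
is characterized by its action on functions. -/
def TorsionFree {D : VFAct R V} (cT : Conn R V V D) : Prop :=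
  ∀ X Y f, D.act (cT.d X Y - cT.d Y X) f = D.act X (D.act Y f) - D.act Y (D.act X f)
/-!
Tensor-field machinery: `TensorAlgebra R V` plays the role of the space
`C^∞(⊗(TM))` of smooth contravariant tensor fields of globally finite order,
`comul` is the tensor coproduct `Δ` (the unique morphism of `R`-algebras with
`Δ X = X ⊗ 1 + 1 ⊗ X` for vector fields `X`), `IsDerivExt` says that a
connection on an algebra of sections is the Leibniz extension of a connection
on its generators, `IsHigherDeriv` characterizes the tensorial extension
`v ↦ ∇^j_v` (for `v ∈ C^∞(⊗^j TM)`) of the higher covariant derivative, via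
`∇^0_f = f·` and `∇^{j+1}_{X₀⊗w} = ∇_{X₀} ∘ ∇^j_w − ∇^j_{∇̂_{X₀} w}`,
and `IsHomConn` characterizes the induced connection on a Hom-bundle. -/

/-- The tensor coproduct on `C^∞(⊗(TM))`: the unique morphism of `R`-algebras
(for the tensor product) with `Δ X = X ⊗ 1 + 1 ⊗ X` for vector fields `X`. -/
noncomputable def comul (R : Type*) (V : Type*) [CommRing R] [AddCommGroup V] [Module R V] :
    TensorAlgebra R V →ₐ[R] TensorAlgebra R V ⊗[R] TensorAlgebra R V :=
  TensorAlgebra.lift R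
    { toFun := fun x => TensorAlgebra.ι R x ⊗ₜ[R] 1 + 1 ⊗ₜ[R] TensorAlgebra.ι R x
      map_add' := by
        intro x y
        simp only [map_add, TensorProduct.add_tmul, TensorProduct.tmul_add]
        abel
      map_smul' := by
        intro c x
        simp only [map_smul, RingHom.id_apply, TensorProduct.smul_tmul',
          TensorProduct.tmul_smul, smul_add] }

/-- `cB` is the Leibniz-rule extension of the connection `cE` to an algebra of sections `B`
generated by the image of `j : E → B`. -/
structure IsDerivExt {R : Type*} [CommRing R] [Algebra ℝ R]
    {V : Type*} [AddCommGroup V] [Module R V]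
    {E : Type*} [AddCommGroup E] [Module R E]
    {B : Type*} [Ring B] [Algebra R B] {D : VFAct R V}
    (cE : Conn R V E D) (cB : Conn R V B D) (j : E → B) : Prop where
  d_gen : ∀ X e, cB.d X (j e) = j (cE.d X e)
  d_mul : ∀ X a b, cB.d X (a * b) = cB.d X a * b + a * cB.d X b

/-- `N` is the tensorial extension `v ↦ ∇^j_v` of the higher covariant derivative of the
connection `cE`, where `v` ranges over tensor fields (`cA` is the Leibniz extension of the
connection on `TM` to `⊗(TM)`).  It is `C^∞(M)`-linear (tensorial) in `v`, satisfies
`∇^0_f α = f • α`, the inductive formula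
`∇_{X₀ ⊗ w} = ∇_{X₀} ∘ ∇_w − ∇_{∇̂_{X₀} w}`, and is ℝ-linear in the section. -/
structure IsHigherDeriv {R : Type*} [CommRing R] [Algebra ℝ R]
    {V : Type*} [AddCommGroup V] [Module R V]
    {E : Type*} [AddCommGroup E] [Module R E] {D : VFAct R V}
    (cE : Conn R V E D) (cA : Conn R V (TensorAlgebra R V) D)
    (N : TensorAlgebra R V →ₗ[R] E → E) : Prop where
  n_algebraMap : ∀ (f : R) (α : E), N (algebraMap R (TensorAlgebra R V) f) α = f • α
  n_mul_ι : ∀ (X : V) (w : TensorAlgebra R V) (α : E),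
      N (TensorAlgebra.ι R X * w) α = cE.d X (N w α) - N (cA.d X w) α
  n_add_right : ∀ v (α β : E), N v (α + β) = N v α + N v β
  n_smul_real : ∀ v (r : ℝ) (α : E), N v (algebraMap ℝ R r • α) = algebraMap ℝ R r • N v α

/-- `cH` is the connection on the Hom-bundle `Hom(E,F)` induced by `cE` and `cF`:
`(∇_X T)(α) = ∇^F_X (T α) − T (∇^E_X α)`. -/
def IsHomConn {R : Type*} [CommRing R] [Algebra ℝ R]
    {V : Type*} [AddCommGroup V] [Module R V]
    {E : Type*} [AddCommGroup E] [Module R E]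
    {F : Type*} [AddCommGroup F] [Module R F] {D : VFAct R V}
    (cE : Conn R V E D) (cF : Conn R V F D) (cH : Conn R V (E →ₗ[R] F) D) : Prop :=
  ∀ X T α, (cH.d X T) α = cF.d X (T α) - T (cE.d X α)

/-- The covariant product `a ⊙ b = a₍₁₎ ⊗ ∇̂^•_{a₍₂₎} b` on `C^∞(⊗(TM))`, where
`NA` is the tensorial higher covariant derivative on tensor fields and `Δ` the
tensor coproduct. -/
noncomputable def odot {R : Type*} [CommRing R] {V : Type*} [AddCommGroup V]
    [Module R V]
    (NA : TensorAlgebra R V →ₗ[R] TensorAlgebra R V → TensorAlgebra R V)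
    (a b : TensorAlgebra R V) : TensorAlgebra R V :=
  ((LinearMap.mul' R (TensorAlgebra R V)).comp
      (TensorProduct.map LinearMap.id
        ((LinearMap.proj b : (TensorAlgebra R V → TensorAlgebra R V) →ₗ[R]
            TensorAlgebra R V).comp NA)))
    (comul R V a)

/-- The filtration of `C^∞(⊗(TM))` by tensor order. -/
noncomputable def tensorFilt (R : Type*) (V : Type*) [CommRing R] [AddCommGroup V]
    [Module R V] (m : ℕ) : Submodule R (TensorAlgebra R V) :=
  ⨆ k ∈ Finset.range (m + 1),
    (LinearMap.range (TensorAlgebra.ι R : V →ₗ[R] TensorAlgebra R V)) ^ k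

section Statement11Aux

set_option linter.unusedSectionVars false

namespace Statement11Aux

open TensorProduct

variable {R : Type*} [CommRing R] [Algebra ℝ R]
variable {V : Type*} [AddCommGroup V] [Module R V]

lemma conn_d_zero {E : Type*} [AddCommGroup E] [Module R E] {D : VFAct R V}
    (c : Conn R V E D) (X : V) : c.d X 0 = 0 := by
  have h := c.d_add_right X 0 0
  rw [add_zero] at h
  exact (left_eq_add.mp h)

lemma conn_d_one {D : VFAct R V} {cT : Conn R V V D}
    {cA : Conn R V (TensorAlgebra R V) D}
    (hA : IsDerivExt cT cA (TensorAlgebra.ι R)) (X : V) : cA.d X 1 = 0 := by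
  have h := hA.d_mul X 1 1
  simp only [mul_one, one_mul] at h
  exact (left_eq_add.mp h)

/-! ### The auxiliary linear map computing `⊙` from the coproduct -/

noncomputable def odotAux (NA : TensorAlgebra R V →ₗ[R] TensorAlgebra R V → TensorAlgebra R V)
    (b : TensorAlgebra R V) :
    TensorAlgebra R V ⊗[R] TensorAlgebra R V →ₗ[R] TensorAlgebra R V :=
  (LinearMap.mul' R (TensorAlgebra R V)).comp
    (TensorProduct.map LinearMap.id
      ((LinearMap.proj b : (TensorAlgebra R V → TensorAlgebra R V) →ₗ[R]
          TensorAlgebra R V).comp NA))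

lemma odot_eq (NA : TensorAlgebra R V →ₗ[R] TensorAlgebra R V → TensorAlgebra R V)
    (a b : TensorAlgebra R V) : odot NA a b = odotAux NA b (comul R V a) := rfl

lemma odotAux_tmul (NA : TensorAlgebra R V →ₗ[R] TensorAlgebra R V → TensorAlgebra R V)
    (b u v : TensorAlgebra R V) : odotAux NA b (u ⊗ₜ[R] v) = u * NA v b := by
  simp [odotAux]

lemma comul_iota (x : V) : comul R V (TensorAlgebra.ι R x) =
    TensorAlgebra.ι R x ⊗ₜ[R] 1 + 1 ⊗ₜ[R] TensorAlgebra.ι R x := by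
  simp [comul, TensorAlgebra.lift_ι_apply]

/-! ### The Leibniz extension `dX ⊗ 1 + 1 ⊗ dX` on `A ⊗ A` -/

noncomputable def phi {D : VFAct R V} (cA : Conn R V (TensorAlgebra R V) D) (X : V) :
    TensorAlgebra R V ⊗[R] TensorAlgebra R V →+ TensorAlgebra R V ⊗[R] TensorAlgebra R V :=
  TensorProduct.liftAddHom
    (AddMonoidHom.mk'
      (fun u => AddMonoidHom.mk'
        (fun v => cA.d X u ⊗ₜ[R] v + u ⊗ₜ[R] cA.d X v)
        (by
          intro v w
          rw [cA.d_add_right, tmul_add, tmul_add]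
          abel))
      (by
        intro u u'
        apply AddMonoidHom.ext
        intro v
        simp only [AddMonoidHom.mk'_apply, AddMonoidHom.add_apply]
        rw [cA.d_add_right, add_tmul, add_tmul]
        abel))
    (by
      intro r m n
      simp only [AddMonoidHom.mk'_apply]
      rw [cA.d_smul_right, cA.d_smul_right, add_tmul, tmul_add,
        smul_tmul, smul_tmul, smul_tmul]
      abel)

lemma phi_tmul {D : VFAct R V} (cA : Conn R V (TensorAlgebra R V) D) (X : V)
    (u v : TensorAlgebra R V) :
    phi cA X (u ⊗ₜ[R] v) = cA.d X u ⊗ₜ[R] v + u ⊗ₜ[R] cA.d X v := rfl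

lemma phi_mul {D : VFAct R V} {cT : Conn R V V D} (cA : Conn R V (TensorAlgebra R V) D)
    (hA : IsDerivExt cT cA (TensorAlgebra.ι R)) (X : V)
    (t s : TensorAlgebra R V ⊗[R] TensorAlgebra R V) :
    phi cA X (t * s) = phi cA X t * s + t * phi cA X s := by
  induction t using TensorProduct.induction_on with
  | zero => simp
  | tmul u v =>
    induction s using TensorProduct.induction_on with
    | zero => simp
    | tmul u' v' =>
      rw [Algebra.TensorProduct.tmul_mul_tmul, phi_tmul, phi_tmul, phi_tmul,
        hA.d_mul, hA.d_mul, add_tmul, tmul_add, add_mul, mul_add,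
        Algebra.TensorProduct.tmul_mul_tmul, Algebra.TensorProduct.tmul_mul_tmul,
        Algebra.TensorProduct.tmul_mul_tmul, Algebra.TensorProduct.tmul_mul_tmul]
      abel
    | add s1 s2 h1 h2 =>
      rw [mul_add, map_add, h1, h2, map_add, mul_add, mul_add]
      abel
  | add t1 t2 h1 h2 =>
    rw [add_mul, map_add, h1, h2, map_add, add_mul, add_mul]
    abel

/-- The coproduct intertwines the Leibniz-extended connection with `phi`. -/
lemma comul_d {D : VFAct R V} {cT : Conn R V V D} (cA : Conn R V (TensorAlgebra R V) D)
    (hA : IsDerivExt cT cA (TensorAlgebra.ι R)) (X : V) (a : TensorAlgebra R V) :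
    comul R V (cA.d X a) = phi cA X (comul R V a) := by
  induction a using TensorAlgebra.induction with
  | algebraMap f =>
    have h1 : cA.d X (algebraMap R (TensorAlgebra R V) f) = D.act X f • 1 := by
      rw [Algebra.algebraMap_eq_smul_one, cA.d_smul_right, conn_d_one hA, smul_zero, add_zero]
    rw [h1, map_smul, map_one, (comul R V).commutes, Algebra.TensorProduct.algebraMap_apply,
      Algebra.algebraMap_eq_smul_one, phi_tmul, cA.d_smul_right, conn_d_one hA, smul_zero,
      add_zero, tmul_zero, add_zero, ← smul_tmul', ← Algebra.TensorProduct.one_def]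
  | ι x =>
    rw [hA.d_gen, comul_iota, comul_iota, map_add, phi_tmul, phi_tmul, hA.d_gen,
      conn_d_one hA, tmul_zero, zero_tmul, add_zero, zero_add]
  | mul a b ha hb =>
    rw [hA.d_mul, map_add, map_mul, map_mul, map_mul, ha, hb, phi_mul cA hA]
  | add a b ha hb =>
    rw [cA.d_add_right, map_add, map_add, map_add, ha, hb]

/-! ### The key structural identity for `⊙` -/

lemma odotAux_lmul_iota (NA : TensorAlgebra R V →ₗ[R] TensorAlgebra R V → TensorAlgebra R V)
    (b : TensorAlgebra R V) (x : V) (t : TensorAlgebra R V ⊗[R] TensorAlgebra R V) :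
    odotAux NA b ((TensorAlgebra.ι R x ⊗ₜ[R] (1 : TensorAlgebra R V)) * t)
      = TensorAlgebra.ι R x * odotAux NA b t := by
  induction t using TensorProduct.induction_on with
  | zero => simp
  | tmul u v =>
    rw [Algebra.TensorProduct.tmul_mul_tmul, one_mul, odotAux_tmul, odotAux_tmul, mul_assoc]
  | add t1 t2 h1 h2 => rw [mul_add, map_add, h1, h2, map_add, mul_add]

lemma odotAux_rmul_iota {D : VFAct R V} {cT : Conn R V V D}
    (cA : Conn R V (TensorAlgebra R V) D)
    (hA : IsDerivExt cT cA (TensorAlgebra.ι R))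
    (NA : TensorAlgebra R V →ₗ[R] TensorAlgebra R V → TensorAlgebra R V)
    (hNA : IsHigherDeriv cA cA NA)
    (b : TensorAlgebra R V) (x : V) (t : TensorAlgebra R V ⊗[R] TensorAlgebra R V) :
    odotAux NA b (((1 : TensorAlgebra R V) ⊗ₜ[R] TensorAlgebra.ι R x) * t)
      = cA.d x (odotAux NA b t) - odotAux NA b (phi cA x t) := by
  induction t using TensorProduct.induction_on with
  | zero => simp [conn_d_zero]
  | tmul u v =>
    rw [Algebra.TensorProduct.tmul_mul_tmul, one_mul, odotAux_tmul, hNA.n_mul_ι,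
      phi_tmul, map_add, odotAux_tmul, odotAux_tmul, odotAux_tmul, hA.d_mul, mul_sub]
    abel
  | add t1 t2 h1 h2 =>
    rw [mul_add, map_add, h1, h2, map_add, cA.d_add_right, map_add, map_add]
    abel

/-- The key identity `(ι X * a) ⊙ b = ι X * (a ⊙ b) + ∇̂_X (a ⊙ b) − (∇̂_X a) ⊙ b`. -/
lemma odot_iota {D : VFAct R V} {cT : Conn R V V D}
    (cA : Conn R V (TensorAlgebra R V) D)
    (hA : IsDerivExt cT cA (TensorAlgebra.ι R))
    (NA : TensorAlgebra R V →ₗ[R] TensorAlgebra R V → TensorAlgebra R V)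
    (hNA : IsHigherDeriv cA cA NA)
    (x : V) (a b : TensorAlgebra R V) :
    odot NA (TensorAlgebra.ι R x * a) b
      = TensorAlgebra.ι R x * odot NA a b + cA.d x (odot NA a b) - odot NA (cA.d x a) b := by
  rw [odot_eq, odot_eq, odot_eq, map_mul, comul_iota, add_mul, map_add,
    odotAux_lmul_iota, odotAux_rmul_iota cA hA NA hNA, comul_d cA hA]
  abel

/-! ### Filtration lemmas -/

lemma filt_sup (n : ℕ) : tensorFilt R V n =
    (Finset.range (n+1)).sup
      (fun k => (LinearMap.range (TensorAlgebra.ι R : V →ₗ[R] TensorAlgebra R V)) ^ k) :=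
  (Finset.sup_eq_iSup _ _).symm

lemma filt_zero : tensorFilt R V 0 = 1 := by
  rw [filt_sup, Finset.range_one, Finset.sup_singleton, pow_zero]

lemma filt_succ' (n : ℕ) : tensorFilt R V (n+1) =
    (LinearMap.range (TensorAlgebra.ι R : V →ₗ[R] TensorAlgebra R V)) ^ (n+1)
      ⊔ tensorFilt R V n := by
  rw [filt_sup, filt_sup, Finset.range_add_one, Finset.sup_insert]

lemma filt_mono : Monotone (tensorFilt R V) := by
  apply monotone_nat_of_le_succ
  intro n
  rw [filt_succ']
  exact le_sup_right

lemma filt_succ (n : ℕ) : tensorFilt R V (n+1) =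
    1 ⊔ (LinearMap.range (TensorAlgebra.ι R : V →ₗ[R] TensorAlgebra R V))
        * tensorFilt R V n := by
  induction n with
  | zero => rw [filt_succ', filt_zero, pow_one, mul_one, sup_comm]
  | succ n ih =>
    conv_rhs => rw [filt_succ' n, Submodule.mul_sup]
    rw [filt_succ' (n+1), pow_succ', ih, sup_left_comm]

lemma one_mem_filt (n : ℕ) : (1 : TensorAlgebra R V) ∈ tensorFilt R V n := by
  apply filt_mono (Nat.zero_le n)
  rw [filt_zero, Submodule.one_eq_span]
  exact Submodule.mem_span_singleton_self 1

lemma iota_mul_mem_filt (x : V) {n : ℕ} {w : TensorAlgebra R V}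
    (hw : w ∈ tensorFilt R V n) :
    TensorAlgebra.ι R x * w ∈ tensorFilt R V (n+1) := by
  rw [filt_succ]
  exact Submodule.mem_sup_right (Submodule.mul_mem_mul (LinearMap.mem_range_self _ x) hw)

lemma filt_mul (i j : ℕ) :
    tensorFilt R V i * tensorFilt R V j ≤ tensorFilt R V (i + j) := by
  induction i with
  | zero =>
    rw [filt_zero, one_mul, Nat.zero_add]
  | succ i ih =>
    rw [filt_succ, Submodule.sup_mul, one_mul]
    apply sup_le
    · exact filt_mono (by omega)
    · rw [mul_assoc]
      calc LinearMap.range (TensorAlgebra.ι R : V →ₗ[R] TensorAlgebra R V)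
            * (tensorFilt R V i * tensorFilt R V j)
          ≤ LinearMap.range (TensorAlgebra.ι R : V →ₗ[R] TensorAlgebra R V)
            * tensorFilt R V (i + j) := mul_le_mul' le_rfl ih
        _ ≤ tensorFilt R V (i + j + 1) := by rw [filt_succ]; exact le_sup_right
        _ = tensorFilt R V (i + 1 + j) := by rw [Nat.add_right_comm]

lemma filt_exhaust (a : TensorAlgebra R V) : ∃ n, a ∈ tensorFilt R V n := by
  induction a using TensorAlgebra.induction with
  | algebraMap f =>
    exact ⟨0, by
      rw [Algebra.algebraMap_eq_smul_one]
      exact Submodule.smul_mem _ _ (one_mem_filt 0)⟩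
  | ι x =>
    refine ⟨1, ?_⟩
    have h := iota_mul_mem_filt (R := R) x (one_mem_filt 0)
    rwa [mul_one] at h
  | mul a b ha hb =>
    obtain ⟨m, hm⟩ := ha
    obtain ⟨n, hn⟩ := hb
    exact ⟨m + n, filt_mul m n (Submodule.mul_mem_mul hm hn)⟩
  | add a b ha hb =>
    obtain ⟨m, hm⟩ := ha
    obtain ⟨n, hn⟩ := hb
    exact ⟨max m n, Submodule.add_mem _ (filt_mono (le_max_left m n) hm)
      (filt_mono (le_max_right m n) hn)⟩

lemma filt_d {D : VFAct R V} {cT : Conn R V V D} {cA : Conn R V (TensorAlgebra R V) D}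
    (hA : IsDerivExt cT cA (TensorAlgebra.ι R)) (X : V) :
    ∀ n, ∀ a ∈ tensorFilt R V n, cA.d X a ∈ tensorFilt R V n := by
  intro n
  induction n with
  | zero =>
    intro a ha
    rw [filt_zero, Submodule.one_eq_span] at ha ⊢
    obtain ⟨f, rfl⟩ := Submodule.mem_span_singleton.mp ha
    rw [cA.d_smul_right, conn_d_one hA, smul_zero, add_zero]
    exact Submodule.smul_mem _ _ (Submodule.mem_span_singleton_self 1)
  | succ n ih =>
    intro a ha
    rw [filt_succ] at ha
    obtain ⟨y, hy, z, hz, rfl⟩ := Submodule.mem_sup.mp ha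
    rw [cA.d_add_right]
    apply Submodule.add_mem
    · rw [Submodule.one_eq_span] at hy
      obtain ⟨f, rfl⟩ := Submodule.mem_span_singleton.mp hy
      rw [cA.d_smul_right, conn_d_one hA, smul_zero, add_zero]
      exact Submodule.smul_mem _ _ (one_mem_filt (n+1))
    · refine Submodule.mul_induction_on hz ?_ ?_
      · rintro p ⟨x, rfl⟩ m hm
        rw [hA.d_mul, hA.d_gen]
        exact Submodule.add_mem _ (iota_mul_mem_filt _ hm) (iota_mul_mem_filt _ (ih m hm))
      · intro u v hu hv
        rw [cA.d_add_right]
        exact Submodule.add_mem _ hu hv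

/-- Induction principle along the tensor-order filtration. -/
lemma filt_ind (S : ℕ → TensorAlgebra R V → Prop)
    (hadd : ∀ n a b, S n a → S n b → S n (a + b))
    (hsmul : ∀ n (f : R) a, S n a → S n (f • a))
    (hone : ∀ n, S n 1)
    (hmul : ∀ n x m, m ∈ tensorFilt R V n → (∀ a ∈ tensorFilt R V n, S n a) →
      S (n+1) (TensorAlgebra.ι R x * m)) :
    ∀ n, ∀ a ∈ tensorFilt R V n, S n a := by
  intro n
  induction n with
  | zero =>
    intro a ha
    rw [filt_zero, Submodule.one_eq_span] at ha
    obtain ⟨f, rfl⟩ := Submodule.mem_span_singleton.mp ha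
    exact hsmul 0 f 1 (hone 0)
  | succ n ih =>
    intro a ha
    rw [filt_succ] at ha
    obtain ⟨y, hy, z, hz, rfl⟩ := Submodule.mem_sup.mp ha
    refine hadd _ _ _ ?_ ?_
    · rw [Submodule.one_eq_span] at hy
      obtain ⟨f, rfl⟩ := Submodule.mem_span_singleton.mp hy
      exact hsmul _ f 1 (hone _)
    · refine Submodule.mul_induction_on hz ?_ ?_
      · rintro p ⟨x, rfl⟩ m hm
        exact hmul n x m hm ih
      · intro u v hu hv
        exact hadd _ _ _ hu hv

/-! ### Linearity and unit lemmas for `⊙`, and the module structure -/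

lemma n_one {E : Type*} [AddCommGroup E] [Module R E] {D : VFAct R V}
    {cE : Conn R V E D} {cA : Conn R V (TensorAlgebra R V) D}
    (N : TensorAlgebra R V →ₗ[R] E → E) (hN : IsHigherDeriv cE cA N) (α : E) :
    N 1 α = α := by
  have h := hN.n_algebraMap 1 α
  rwa [map_one, one_smul] at h

lemma odot_add_left (NA : TensorAlgebra R V →ₗ[R] TensorAlgebra R V → TensorAlgebra R V)
    (a a' b : TensorAlgebra R V) :
    odot NA (a + a') b = odot NA a b + odot NA a' b := by
  rw [odot_eq, odot_eq, odot_eq, map_add, map_add]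

lemma odot_smul_left (NA : TensorAlgebra R V →ₗ[R] TensorAlgebra R V → TensorAlgebra R V)
    (f : R) (a b : TensorAlgebra R V) :
    odot NA (f • a) b = f • odot NA a b := by
  rw [odot_eq, odot_eq, map_smul, map_smul]

lemma odot_sub_left (NA : TensorAlgebra R V →ₗ[R] TensorAlgebra R V → TensorAlgebra R V)
    (a a' b : TensorAlgebra R V) :
    odot NA (a - a') b = odot NA a b - odot NA a' b := by
  rw [odot_eq, odot_eq, odot_eq, map_sub, map_sub]

lemma odot_one_left {D : VFAct R V} {cA : Conn R V (TensorAlgebra R V) D}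
    (NA : TensorAlgebra R V →ₗ[R] TensorAlgebra R V → TensorAlgebra R V)
    (hNA : IsHigherDeriv cA cA NA) (b : TensorAlgebra R V) :
    odot NA 1 b = b := by
  rw [odot_eq, map_one, Algebra.TensorProduct.one_def, odotAux_tmul,
    n_one NA hNA, one_mul]

lemma odot_add_right {D : VFAct R V} {cA : Conn R V (TensorAlgebra R V) D}
    (NA : TensorAlgebra R V →ₗ[R] TensorAlgebra R V → TensorAlgebra R V)
    (hNA : IsHigherDeriv cA cA NA) (a b b' : TensorAlgebra R V) :
    odot NA a (b + b') = odot NA a b + odot NA a b' := by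
  rw [odot_eq, odot_eq, odot_eq]
  induction comul R V a using TensorProduct.induction_on with
  | zero => simp
  | tmul u v => rw [odotAux_tmul, odotAux_tmul, odotAux_tmul, hNA.n_add_right, mul_add]
  | add t1 t2 h1 h2 => rw [map_add, map_add, map_add, h1, h2]; abel

lemma odot_smul_real_right {D : VFAct R V} {cA : Conn R V (TensorAlgebra R V) D}
    (NA : TensorAlgebra R V →ₗ[R] TensorAlgebra R V → TensorAlgebra R V)
    (hNA : IsHigherDeriv cA cA NA) (r : ℝ) (a b : TensorAlgebra R V) :
    odot NA a (algebraMap ℝ R r • b) = algebraMap ℝ R r • odot NA a b := by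
  rw [odot_eq, odot_eq]
  induction comul R V a using TensorProduct.induction_on with
  | zero => simp
  | tmul u v => rw [odotAux_tmul, odotAux_tmul, hNA.n_smul_real, mul_smul_comm]
  | add t1 t2 h1 h2 => rw [map_add, map_add, h1, h2, smul_add]

lemma odot_one_right {D : VFAct R V} {cT : Conn R V V D}
    (cA : Conn R V (TensorAlgebra R V) D)
    (hA : IsDerivExt cT cA (TensorAlgebra.ι R))
    (NA : TensorAlgebra R V →ₗ[R] TensorAlgebra R V → TensorAlgebra R V)
    (hNA : IsHigherDeriv cA cA NA) (a : TensorAlgebra R V) :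
    odot NA a 1 = a := by
  obtain ⟨n, hn⟩ := filt_exhaust a
  refine filt_ind (fun _ a => odot NA a 1 = a) ?_ ?_ ?_ ?_ n a hn
  · intro n a b ha hb; rw [odot_add_left, ha, hb]
  · intro n f a ha; rw [odot_smul_left, ha]
  · intro n; exact odot_one_left NA hNA 1
  · intro n x m hm ih
    rw [odot_iota cA hA NA hNA, ih m hm, ih (cA.d x m) (filt_d hA x n m hm),
      add_sub_cancel_right]

lemma odot_assoc {D : VFAct R V} {cT : Conn R V V D}
    (cA : Conn R V (TensorAlgebra R V) D)
    (hA : IsDerivExt cT cA (TensorAlgebra.ι R))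
    (NA : TensorAlgebra R V →ₗ[R] TensorAlgebra R V → TensorAlgebra R V)
    (hNA : IsHigherDeriv cA cA NA) (a b c : TensorAlgebra R V) :
    odot NA (odot NA a b) c = odot NA a (odot NA b c) := by
  obtain ⟨n, hn⟩ := filt_exhaust a
  refine filt_ind
    (fun _ a => ∀ b c, odot NA (odot NA a b) c = odot NA a (odot NA b c))
    ?_ ?_ ?_ ?_ n a hn b c
  · intro n a a' ha hb b c
    rw [odot_add_left, odot_add_left, ha, hb, odot_add_left]
  · intro n f a ha b c
    rw [odot_smul_left, odot_smul_left, ha, odot_smul_left]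
  · intro n b c
    rw [odot_one_left NA hNA, odot_one_left NA hNA]
  · intro n x m hm ih b c
    rw [odot_iota cA hA NA hNA, odot_iota cA hA NA hNA, odot_sub_left, odot_add_left,
      odot_iota cA hA NA hNA, ih m hm b c, ih (cA.d x m) (filt_d hA x n m hm) b c]
    abel

lemma n_module {E : Type*} [AddCommGroup E] [Module R E] {D : VFAct R V}
    {cT : Conn R V V D} {cE : Conn R V E D}
    (cA : Conn R V (TensorAlgebra R V) D)
    (hA : IsDerivExt cT cA (TensorAlgebra.ι R))
    (NA : TensorAlgebra R V →ₗ[R] TensorAlgebra R V → TensorAlgebra R V)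
    (hNA : IsHigherDeriv cA cA NA)
    (N : TensorAlgebra R V →ₗ[R] E → E) (hN : IsHigherDeriv cE cA N)
    (a b : TensorAlgebra R V) (α : E) :
    N (odot NA a b) α = N a (N b α) := by
  obtain ⟨n, hn⟩ := filt_exhaust a
  refine filt_ind
    (fun _ a => ∀ b α, N (odot NA a b) α = N a (N b α)) ?_ ?_ ?_ ?_ n a hn b α
  · intro n a a' ha hb b α
    rw [odot_add_left, map_add, map_add]
    simp only [Pi.add_apply]
    rw [ha b α, hb b α]
  · intro n f a ha b α
    rw [odot_smul_left, map_smul, map_smul]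
    simp only [Pi.smul_apply]
    rw [ha b α]
  · intro n b α
    rw [odot_one_left NA hNA, n_one N hN]
  · intro n x m hm ih b α
    rw [odot_iota cA hA NA hNA, map_sub, map_add]
    simp only [Pi.sub_apply, Pi.add_apply]
    rw [hN.n_mul_ι, hN.n_mul_ι, ih m hm b α, ih (cA.d x m) (filt_d hA x n m hm) b α]
    abel

lemma odot_filt {D : VFAct R V} {cT : Conn R V V D}
    (cA : Conn R V (TensorAlgebra R V) D)
    (hA : IsDerivExt cT cA (TensorAlgebra.ι R))
    (NA : TensorAlgebra R V →ₗ[R] TensorAlgebra R V → TensorAlgebra R V)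
    (hNA : IsHigherDeriv cA cA NA)
    (i j : ℕ) (a b : TensorAlgebra R V)
    (ha : a ∈ tensorFilt R V i) (hb : b ∈ tensorFilt R V j) :
    odot NA a b ∈ tensorFilt R V (i + j) := by
  refine filt_ind
    (fun i a => ∀ j b, b ∈ tensorFilt R V j → odot NA a b ∈ tensorFilt R V (i + j))
    ?_ ?_ ?_ ?_ i a ha j b hb
  · intro n a a' ha' hb' j b hbj
    rw [odot_add_left]
    exact Submodule.add_mem _ (ha' j b hbj) (hb' j b hbj)
  · intro n f a ha' j b hbj
    rw [odot_smul_left]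
    exact Submodule.smul_mem _ _ (ha' j b hbj)
  · intro n j b hbj
    rw [odot_one_left NA hNA]
    exact filt_mono (by omega) hbj
  · intro n x m hm ih j b hbj
    rw [odot_iota cA hA NA hNA]
    have h1 : odot NA m b ∈ tensorFilt R V (n + j) := ih m hm j b hbj
    have h2 := iota_mul_mem_filt x h1
    have h3 : cA.d x (odot NA m b) ∈ tensorFilt R V (n + j) := filt_d hA x _ _ h1
    have h4 : odot NA (cA.d x m) b ∈ tensorFilt R V (n + j) :=
      ih (cA.d x m) (filt_d hA x n m hm) j b hbj
    have hidx : n + 1 + j = (n + j) + 1 := by omega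
    rw [hidx]
    exact Submodule.sub_mem _
      (Submodule.add_mem _ h2 (filt_mono (by omega) h3))
      (filt_mono (by omega) h4)

end Statement11Aux

end Statement11Aux

open Statement11Aux
/-- The covariant product.  The covariant product
`a ⊙ b = a₍₁₎ ⊗ ∇̂^•_{a₍₂₎} b` makes `A = C^∞(⊗(TM))` a unital, associative,
filtered ℝ-algebra (unit the constant function `1`, filtration by tensor order),
and for every bundle `E` with connection the map `X ↦ ∇^•_X` is a homomorphism of
(filtered) ℝ-algebras from `A` to the ℝ-linear endomorphisms of `C^∞(E)` under
composition; in particular `C^∞(E)` is a left `A`-module.  (The ℝ-scalar action is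
written via `algebraMap ℝ R`.) -/
theorem statement11
    {R : Type*} [CommRing R] [Algebra ℝ R]
    {V : Type*} [AddCommGroup V] [Module R V]
    {E : Type*} [AddCommGroup E] [Module R E]
    {D : VFAct R V} (cT : Conn R V V D) (cE : Conn R V E D)
    (cA : Conn R V (TensorAlgebra R V) D)
    (hA : IsDerivExt cT cA (TensorAlgebra.ι R))
    (NA : TensorAlgebra R V →ₗ[R] TensorAlgebra R V → TensorAlgebra R V)
    (hNA : IsHigherDeriv cA cA NA)
    (N : TensorAlgebra R V →ₗ[R] E → E) (hN : IsHigherDeriv cE cA N) :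
    -- `⊙` is unital
    (∀ b : TensorAlgebra R V, odot NA 1 b = b) ∧
    (∀ a : TensorAlgebra R V, odot NA a 1 = a) ∧
    -- `⊙` is associative
    (∀ a b c : TensorAlgebra R V, odot NA (odot NA a b) c = odot NA a (odot NA b c)) ∧
    -- `⊙` is ℝ-bilinear
    (∀ a a' b : TensorAlgebra R V, odot NA (a + a') b = odot NA a b + odot NA a' b) ∧
    (∀ a b b' : TensorAlgebra R V, odot NA a (b + b') = odot NA a b + odot NA a b') ∧
    (∀ (r : ℝ) (a b : TensorAlgebra R V),
      odot NA (algebraMap ℝ R r • a) b = algebraMap ℝ R r • odot NA a b) ∧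
    (∀ (r : ℝ) (a b : TensorAlgebra R V),
      odot NA a (algebraMap ℝ R r • b) = algebraMap ℝ R r • odot NA a b) ∧
    -- `⊙` is filtered
    (∀ (i j : ℕ) (a b : TensorAlgebra R V), a ∈ tensorFilt R V i → b ∈ tensorFilt R V j →
      odot NA a b ∈ tensorFilt R V (i + j)) ∧
    -- `X ↦ ∇^•_X` is a unital ℝ-algebra homomorphism into endomorphisms of `C^∞(E)`,
    -- i.e. `C^∞(E)` is a left `A`-module
    (∀ α : E, N 1 α = α) ∧
    (∀ (a b : TensorAlgebra R V) (α : E), N (odot NA a b) α = N a (N b α)) ∧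
    (∀ (r : ℝ) (a : TensorAlgebra R V) (α : E),
      N (algebraMap ℝ R r • a) α = algebraMap ℝ R r • N a α) := by
  refine ⟨fun b => odot_one_left NA hNA b,
    fun a => odot_one_right cA hA NA hNA a,
    fun a b c => odot_assoc cA hA NA hNA a b c,
    fun a a' b => odot_add_left NA a a' b,
    fun a b b' => odot_add_right NA hNA a b b',
    fun r a b => odot_smul_left NA (algebraMap ℝ R r) a b,
    fun r a b => odot_smul_real_right NA hNA r a b,
    fun i j a b ha hb => odot_filt cA hA NA hNA i j a b ha hb,
    fun α => n_one N hN α,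
    fun a b α => n_module cA hA NA hNA N hN a b α,
    fun r a α => ?_⟩
  rw [map_smul]
  simp only [Pi.smul_apply]
end

section
/- Compatibility of the covariant product with the tensor coproduct: for all a, b ∈ A = C∞(⊗(TM)), Δ(a ⊙ b) = (a_{(1)} ⊙ b_{(1)}) ⊗ (a_{(2)} ⊙ b_{(2)}); equivalently, the square with horizontal arrows ⊙ : A⊗A → A and Δ : A → A⊗A, left vertical arrow Δ⊗Δ, bottom arrow id⊗τ⊗id (with τ the flip), and right vertical arrow ⊙⊗⊙, commutes. -/
/-!
Algebraic framework for manifolds with connection: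
`R` plays the role of the ring of smooth functions `C^∞(M)`,
`V` the `C^∞(M)`-module of smooth vector fields `C^∞(TM)`,
`VFAct` the action of vector fields on functions as derivations,
`Conn` a connection (covariant derivative) on the module of sections `E`
of a vector bundle, and `hcd` the higher covariant derivative defined
inductively by
`∇^{j+1}_{X₀,…,X_j} α = ∇_{X₀}(∇^j_{X₁,…,X_j} α) − Σ_k ∇^j_{X₁,…,∇̂_{X₀}X_k,…,X_j} α`.
-/

open TensorProduct

variable {R : Type*} [CommRing R] [Algebra ℝ R]
variable {V : Type*} [AddCommGroup V] [Module R V]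

section Statement12Aux

variable {R : Type*} [CommRing R] [Algebra ℝ R]
variable {V : Type*} [AddCommGroup V] [Module R V]
variable {D : VFAct R V} {cT : Conn R V V D}
variable {cA : Conn R V (TensorAlgebra R V) D}

local notation "TA" => TensorAlgebra R V

theorem aux_d_one (hA : IsDerivExt cT cA (TensorAlgebra.ι R)) (X : V) :
    cA.d X (1 : TA) = 0 := by
  have h := hA.d_mul X 1 1
  rw [mul_one, one_mul, mul_one] at h
  exact (left_eq_add.mp h)

theorem aux_d_algebraMap (hA : IsDerivExt cT cA (TensorAlgebra.ι R)) (X : V) (f : R) :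
    cA.d X (algebraMap R TA f) = algebraMap R TA (D.act X f) := by
  rw [Algebra.algebraMap_eq_smul_one, cA.d_smul_right, aux_d_one hA, smul_zero, add_zero,
    Algebra.algebraMap_eq_smul_one]

theorem aux_comul_ι (X : V) :
    comul R V (TensorAlgebra.ι R X) =
      TensorAlgebra.ι R X ⊗ₜ[R] 1 + 1 ⊗ₜ[R] TensorAlgebra.ι R X := by
  simp [comul, TensorAlgebra.lift_ι_apply]


/-- `∇_X ⊗ 1 + 1 ⊗ ∇_X` on `A ⊗[R] A`, as an additive map. -/
noncomputable def auxD2 (cA : Conn R V (TensorAlgebra R V) D) (X : V) :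
    TensorAlgebra R V ⊗[R] TensorAlgebra R V →+ TensorAlgebra R V ⊗[R] TensorAlgebra R V :=
  TensorProduct.liftAddHom
    (AddMonoidHom.mk'
      (fun p => AddMonoidHom.mk' (fun q => cA.d X p ⊗ₜ[R] q + p ⊗ₜ[R] cA.d X q)
        (fun q₁ q₂ => by
          rw [cA.d_add_right, TensorProduct.tmul_add, TensorProduct.tmul_add]
          abel))
      (fun p₁ p₂ => by
        ext q
        simp only [AddMonoidHom.mk'_apply, AddMonoidHom.add_apply]
        rw [cA.d_add_right, TensorProduct.add_tmul, TensorProduct.add_tmul]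
        abel))
    (by
      intro r p q
      simp only [AddMonoidHom.mk'_apply]
      rw [cA.d_smul_right, cA.d_smul_right, TensorProduct.add_tmul, TensorProduct.tmul_add,
        TensorProduct.smul_tmul, TensorProduct.smul_tmul, TensorProduct.smul_tmul]
      abel)

@[simp] theorem auxD2_tmul (X : V) (p q : TA) :
    auxD2 cA X (p ⊗ₜ[R] q) = cA.d X p ⊗ₜ[R] q + p ⊗ₜ[R] cA.d X q := rfl

theorem auxD2_mul (hA : IsDerivExt cT cA (TensorAlgebra.ι R)) (X : V)
    (s t : TA ⊗[R] TA) :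
    auxD2 cA X (s * t) = auxD2 cA X s * t + s * auxD2 cA X t := by
  induction s using TensorProduct.induction_on with
  | zero => simp
  | tmul p q =>
    induction t using TensorProduct.induction_on with
    | zero => simp
    | tmul r w =>
      rw [Algebra.TensorProduct.tmul_mul_tmul, auxD2_tmul, auxD2_tmul, auxD2_tmul,
        hA.d_mul, hA.d_mul, TensorProduct.add_tmul, TensorProduct.tmul_add,
        add_mul, mul_add, Algebra.TensorProduct.tmul_mul_tmul,
        Algebra.TensorProduct.tmul_mul_tmul, Algebra.TensorProduct.tmul_mul_tmul,
        Algebra.TensorProduct.tmul_mul_tmul]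
      abel
    | add t₁ t₂ h₁ h₂ =>
      simp only [mul_add, map_add, h₁, h₂, add_mul]
      abel
  | add s₁ s₂ h₁ h₂ =>
    simp only [add_mul, map_add, h₁, h₂, mul_add]
    abel

theorem aux_comul_d (hA : IsDerivExt cT cA (TensorAlgebra.ι R)) (X : V) (t : TA) :
    comul R V (cA.d X t) = auxD2 cA X (comul R V t) := by
  induction t using TensorAlgebra.induction with
  | algebraMap f =>
    rw [aux_d_algebraMap hA, AlgHom.commutes, AlgHom.commutes,
      Algebra.TensorProduct.algebraMap_apply, Algebra.TensorProduct.algebraMap_apply,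
      auxD2_tmul, aux_d_one hA, aux_d_algebraMap hA, TensorProduct.tmul_zero, add_zero]
  | ι Y =>
    rw [hA.d_gen, aux_comul_ι, aux_comul_ι, map_add, auxD2_tmul, auxD2_tmul,
      hA.d_gen, aux_d_one hA]
    simp only [TensorProduct.tmul_zero, TensorProduct.zero_tmul, add_zero, zero_add]
  | mul a b ha hb =>
    rw [hA.d_mul, map_add, map_mul, map_mul, map_mul, ha, hb, auxD2_mul hA]
  | add a b ha hb =>
    rw [cA.d_add_right, map_add, map_add, ha, hb, map_add]

/-- `Ψ(t) u w`, heuristically `(N_{t₁} u) ⊗ (N_{t₂} w)` for `t = t₁ ⊗ t₂`. -/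
noncomputable def auxPsi (NA : TensorAlgebra R V →ₗ[R] TensorAlgebra R V → TensorAlgebra R V)
    (u w : TensorAlgebra R V) :
    TensorAlgebra R V ⊗[R] TensorAlgebra R V →ₗ[R] TensorAlgebra R V ⊗[R] TensorAlgebra R V :=
  TensorProduct.map
    ((LinearMap.proj u : (TensorAlgebra R V → TensorAlgebra R V) →ₗ[R] TensorAlgebra R V).comp NA)
    ((LinearMap.proj w : (TensorAlgebra R V → TensorAlgebra R V) →ₗ[R] TensorAlgebra R V).comp NA)

@[simp] theorem auxPsi_tmul (NA : TA →ₗ[R] TA → TA) (u w p q : TA) :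
    auxPsi NA u w (p ⊗ₜ[R] q) = NA p u ⊗ₜ[R] NA q w := by
  simp [auxPsi]

theorem aux_keyPt {NA : TA →ₗ[R] TA → TA} (hNA : IsHigherDeriv cA cA NA) (X : V) (u w : TA)
    (t : TA ⊗[R] TA) :
    auxPsi NA u w ((TensorAlgebra.ι R X ⊗ₜ[R] 1 + 1 ⊗ₜ[R] TensorAlgebra.ι R X) * t)
      = auxD2 cA X (auxPsi NA u w t) - auxPsi NA u w (auxD2 cA X t) := by
  induction t using TensorProduct.induction_on with
  | zero => simp
  | tmul p q =>
    simp only [add_mul, Algebra.TensorProduct.tmul_mul_tmul, one_mul, map_add, auxPsi_tmul,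
      hNA.n_mul_ι, auxD2_tmul, TensorProduct.sub_tmul, TensorProduct.tmul_sub]
    abel
  | add t₁ t₂ h₁ h₂ =>
    simp only [mul_add, map_add, h₁, h₂]
    abel

theorem aux_d_mem_pow (hA : IsDerivExt cT cA (TensorAlgebra.ι R)) (X : V) :
    ∀ (n : ℕ) (t : TA),
      t ∈ (LinearMap.range (TensorAlgebra.ι R : V →ₗ[R] TensorAlgebra R V)) ^ n →
      cA.d X t ∈ (LinearMap.range (TensorAlgebra.ι R : V →ₗ[R] TensorAlgebra R V)) ^ n := by
  intro n
  induction n with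
  | zero =>
    intro t ht
    rw [pow_zero, Submodule.mem_one] at ht ⊢
    obtain ⟨r, rfl⟩ := ht
    exact ⟨D.act X r, (aux_d_algebraMap hA X r).symm⟩
  | succ n ih =>
    intro t ht
    rw [pow_succ'] at ht ⊢
    refine Submodule.mul_induction_on ht (fun x hx y hy => ?_) (fun a b ha hb => ?_)
    · obtain ⟨Y, rfl⟩ := hx
      rw [hA.d_mul, hA.d_gen]
      exact add_mem (Submodule.mul_mem_mul (LinearMap.mem_range_self _ _) hy)
        (Submodule.mul_mem_mul (LinearMap.mem_range_self _ _) (ih y hy))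
    · rw [cA.d_add_right]
      exact add_mem ha hb

theorem aux_key (hA : IsDerivExt cT cA (TensorAlgebra.ι R))
    {NA : TA →ₗ[R] TA → TA} (hNA : IsHigherDeriv cA cA NA) :
    ∀ (t b : TA) (m : ℕ) (u w : Fin m → TA), comul R V b = ∑ j, u j ⊗ₜ[R] w j →
      comul R V (NA t b) = ∑ j, auxPsi NA (u j) (w j) (comul R V t) := by
  have main : ∀ (n : ℕ) (t : TA),
      t ∈ (LinearMap.range (TensorAlgebra.ι R : V →ₗ[R] TensorAlgebra R V)) ^ n →
      ∀ (b : TA) (m : ℕ) (u w : Fin m → TA), comul R V b = ∑ j, u j ⊗ₜ[R] w j →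
      comul R V (NA t b) = ∑ j, auxPsi NA (u j) (w j) (comul R V t) := by
    intro n
    induction n with
    | zero =>
      intro t ht b m u w hb
      rw [pow_zero, Submodule.mem_one] at ht
      obtain ⟨r, rfl⟩ := ht
      have h1 : ∀ z : TA, NA (1 : TA) z = z := by
        intro z
        have := hNA.n_algebraMap 1 z
        rw [map_one] at this
        simpa using this
      rw [hNA.n_algebraMap, map_smul, hb, Finset.smul_sum, AlgHom.commutes,
        Algebra.TensorProduct.algebraMap_apply]
      refine Finset.sum_congr rfl fun j _ => ?_
      rw [auxPsi_tmul, h1, hNA.n_algebraMap, TensorProduct.smul_tmul']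
    | succ n ih =>
      intro t ht b m u w hb
      rw [pow_succ'] at ht
      refine Submodule.mul_induction_on ht (fun x hx y hy => ?_) (fun s t hs ht' => ?_)
      · obtain ⟨X, rfl⟩ := hx
        have hP := ih y hy b m u w hb
        have hPd := ih (cA.d X y) (aux_d_mem_pow hA X n y hy) b m u w hb
        rw [hNA.n_mul_ι, map_sub, aux_comul_d hA, hP, hPd, aux_comul_d hA,
          map_mul, aux_comul_ι]
        simp only [map_sum, aux_keyPt hNA, Finset.sum_sub_distrib]
      · have hst : NA (s + t) b = NA s b + NA t b := by rw [map_add]; rfl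
        rw [hst]
        simp only [map_add, hs, ht', Finset.sum_add_distrib]
  intro t
  refine DirectSum.Decomposition.inductionOn
    (fun n : ℕ => (LinearMap.range (TensorAlgebra.ι R : V →ₗ[R] TensorAlgebra R V)) ^ n)
    (motive := fun t => ∀ (b : TA) (m : ℕ) (u w : Fin m → TA),
      comul R V b = ∑ j, u j ⊗ₜ[R] w j →
      comul R V (NA t b) = ∑ j, auxPsi NA (u j) (w j) (comul R V t))
    ?_ ?_ ?_ t
  · intro b m u w hb
    have h0 : NA (0 : TA) b = 0 := by rw [map_zero]; rfl
    simp [h0]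
  · intro i x
    exact main i x.1 x.2
  · intro s t' hs ht' b m u w hb
    have hst : NA (s + t') b = NA s b + NA t' b := by rw [map_add]; rfl
    rw [hst]
    simp only [map_add, hs b m u w hb, ht' b m u w hb, Finset.sum_add_distrib]

theorem aux_comul4 (a : TA) :
    (Algebra.TensorProduct.tensorTensorTensorComm R R R R TA TA TA TA)
        ((Algebra.TensorProduct.map (comul R V) (comul R V)) (comul R V a))
      = (Algebra.TensorProduct.map (comul R V) (comul R V)) (comul R V a) := by
  have h : ((Algebra.TensorProduct.tensorTensorTensorComm R R R R TA TA TA TA).toAlgHom.comp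
        ((Algebra.TensorProduct.map (comul R V) (comul R V)).comp (comul R V)))
      = ((Algebra.TensorProduct.map (comul R V) (comul R V)).comp (comul R V)) := by
    ext X
    simp only [LinearMap.coe_comp, Function.comp_apply, AlgHom.toLinearMap_apply,
      AlgHom.comp_apply, AlgHom.coe_comp, AlgEquiv.toAlgHom_eq_coe,
      AlgHom.coe_coe, AlgEquiv.coe_algHom, aux_comul_ι, map_add, Algebra.TensorProduct.one_def, Algebra.TensorProduct.map_tmul, map_one,
      Algebra.TensorProduct.tensorTensorTensorComm_tmul, TensorProduct.tmul_add,
      TensorProduct.add_tmul]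
    abel
  exact AlgHom.congr_fun h a

/-- The `A ⊗ A →ₗ A` kernel of the covariant product. -/
noncomputable def auxOdotKer (NA : TensorAlgebra R V →ₗ[R] TensorAlgebra R V → TensorAlgebra R V)
    (b : TensorAlgebra R V) : TensorAlgebra R V ⊗[R] TensorAlgebra R V →ₗ[R] TensorAlgebra R V :=
  (LinearMap.mul' R (TensorAlgebra R V)).comp
    (TensorProduct.map LinearMap.id
      ((LinearMap.proj b : (TensorAlgebra R V → TensorAlgebra R V) →ₗ[R] TensorAlgebra R V).comp
        NA))

theorem aux_odot_eq (NA : TA →ₗ[R] TA → TA) (a b : TA) :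
    odot NA a b = auxOdotKer NA b (comul R V a) := rfl

@[simp] theorem auxOdotKer_tmul (NA : TA →ₗ[R] TA → TA) (b p q : TA) :
    auxOdotKer NA b (p ⊗ₜ[R] q) = p * NA q b := by
  simp [auxOdotKer, LinearMap.mul'_apply]

theorem aux_theta (NA : TA →ₗ[R] TA → TA) (u w : TA) :
    (LinearMap.mul' R (TA ⊗[R] TA)).comp
        (TensorProduct.map LinearMap.id (auxPsi NA u w))
      = (TensorProduct.map (auxOdotKer NA u) (auxOdotKer NA w)).comp
          (TensorProduct.tensorTensorTensorComm R TA TA TA TA).toLinearMap := by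
  ext p q r s
  simp [LinearMap.mul'_apply, Algebra.TensorProduct.tmul_mul_tmul]

end Statement12Aux
/-- Compatibility of the covariant product with the tensor
coproduct.  For all `a, b ∈ A = C^∞(⊗(TM))` one has, in Sweedler notation,
`Δ(a ⊙ b) = (a₍₁₎ ⊙ b₍₁₎) ⊗ (a₍₂₎ ⊙ b₍₂₎)`: for any finite representations
`Δ a = Σᵢ xᵢ ⊗ yᵢ` and `Δ b = Σⱼ uⱼ ⊗ vⱼ` of the tensor coproducts,
`Δ(a ⊙ b) = Σᵢ Σⱼ (xᵢ ⊙ uⱼ) ⊗ (yᵢ ⊙ vⱼ)`.  Equivalently, the square with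
horizontal arrows `⊙ : A⊗A → A` and `Δ : A → A⊗A`, left vertical arrow `Δ⊗Δ`,
bottom arrow `id⊗τ⊗id` (`τ` the flip) and right vertical arrow `⊙⊗⊙` commutes. -/
theorem statement12
    {R : Type*} [CommRing R] [Algebra ℝ R]
    {V : Type*} [AddCommGroup V] [Module R V]
    {D : VFAct R V} (cT : Conn R V V D)
    (cA : Conn R V (TensorAlgebra R V) D)
    (hA : IsDerivExt cT cA (TensorAlgebra.ι R))
    (NA : TensorAlgebra R V →ₗ[R] TensorAlgebra R V → TensorAlgebra R V)
    (hNA : IsHigherDeriv cA cA NA) :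
    ∀ (a b : TensorAlgebra R V) (n m : ℕ)
      (x y : Fin n → TensorAlgebra R V) (u v : Fin m → TensorAlgebra R V),
      comul R V a = ∑ i, x i ⊗ₜ[R] y i →
      comul R V b = ∑ j, u j ⊗ₜ[R] v j →
      comul R V (odot NA a b) =
        ∑ i, ∑ j, odot NA (x i) (u j) ⊗ₜ[R] odot NA (y i) (v j) := by
  intro a b n m x y u v hab hb
  have hodot : odot NA a b = ∑ i, x i * NA (y i) b := by
    rw [aux_odot_eq, hab, map_sum]
    exact Finset.sum_congr rfl fun i _ => by rw [auxOdotKer_tmul]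
  set T : (TensorAlgebra R V ⊗[R] TensorAlgebra R V) ⊗[R]
      (TensorAlgebra R V ⊗[R] TensorAlgebra R V) :=
    ∑ i, comul R V (x i) ⊗ₜ[R] comul R V (y i) with hTdef
  have hT : (Algebra.TensorProduct.map (comul R V) (comul R V)) (comul R V a) = T := by
    rw [hab, map_sum]
    exact Finset.sum_congr rfl fun i _ => by rw [Algebra.TensorProduct.map_tmul]
  have hσT : (TensorProduct.tensorTensorTensorComm R (TensorAlgebra R V) (TensorAlgebra R V)
      (TensorAlgebra R V) (TensorAlgebra R V)) T = T := by
    have key := aux_comul4 (R := R) (V := V) a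
    rw [hT] at key
    have hbr : (TensorProduct.tensorTensorTensorComm R (TensorAlgebra R V) (TensorAlgebra R V)
        (TensorAlgebra R V) (TensorAlgebra R V)) T
        = (Algebra.TensorProduct.tensorTensorTensorComm R R R R (TensorAlgebra R V) (TensorAlgebra R V)
        (TensorAlgebra R V) (TensorAlgebra R V)) T := by
      rw [← Algebra.TensorProduct.toLinearEquiv_tensorTensorTensorComm]
      rfl
    rw [hbr, key]
  calc comul R V (odot NA a b)
      = ∑ i, comul R V (x i) * comul R V (NA (y i) b) := by
        rw [hodot, map_sum]
        exact Finset.sum_congr rfl fun i _ => map_mul _ _ _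
    _ = ∑ i, ∑ j, ((LinearMap.mul' R (TensorAlgebra R V ⊗[R] TensorAlgebra R V)).comp
          (TensorProduct.map LinearMap.id (auxPsi NA (u j) (v j))))
          (comul R V (x i) ⊗ₜ[R] comul R V (y i)) := by
        refine Finset.sum_congr rfl fun i _ => ?_
        rw [aux_key hA hNA (y i) b m u v hb, Finset.mul_sum]
        refine Finset.sum_congr rfl fun j _ => ?_
        simp [LinearMap.mul'_apply]
    _ = ∑ j, ((LinearMap.mul' R (TensorAlgebra R V ⊗[R] TensorAlgebra R V)).comp
          (TensorProduct.map LinearMap.id (auxPsi NA (u j) (v j)))) T := by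
        rw [Finset.sum_comm]
        exact Finset.sum_congr rfl fun j _ => (map_sum _ _ _).symm
    _ = ∑ j, (TensorProduct.map (auxOdotKer NA (u j)) (auxOdotKer NA (v j))) T := by
        refine Finset.sum_congr rfl fun j _ => ?_
        rw [aux_theta, LinearMap.comp_apply, LinearEquiv.coe_coe, hσT]
    _ = ∑ j, ∑ i, odot NA (x i) (u j) ⊗ₜ[R] odot NA (y i) (v j) := by
        refine Finset.sum_congr rfl fun j _ => ?_
        rw [hTdef, map_sum]
        exact Finset.sum_congr rfl fun i _ => by rw [TensorProduct.map_tmul]; rfl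
    _ = ∑ i, ∑ j, odot NA (x i) (u j) ⊗ₜ[R] odot NA (y i) (v j) := Finset.sum_comm
end

section
/- Evaluation of higher covariant derivatives on centered monomials: let p ∈ M and let (e^i)_{i=1}^n be coordinate functions on a neighborhood of p with coordinate vector fields e_i. Let S be a word with letters in {1,…,n} and let T be an n-dimensional multi-index with |S| ≤ |T|. Then [∇̂^{|S|}_{e_S} ((e−p)^T / T!)]_p = δ_{⟨S⟩, T}, where (e−p)^T is the monomial in the functions e^i − e^i(p) with exponents T, T! is the product of factorials of the entries of T, ⟨S⟩ is the multi-index counting occurrences of each letter in S, and δ is the Kronecker delta. More generally, for α ∈ C∞(E), [∇^{|S|}_{e_S} ((e−p)^T/T! · α)]_p = δ_{⟨S⟩, T} · α_p. -/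
/-!
Algebraic framework for manifolds with connection:
`R` plays the role of the ring of smooth functions `C^∞(M)`,
`V` the `C^∞(M)`-module of smooth vector fields `C^∞(TM)`,
`VFAct` the action of vector fields on functions as derivations,
`Conn` a connection (covariant derivative) on the module of sections `E`
of a vector bundle, and `hcd` the higher covariant derivative defined
inductively by
`∇^{j+1}_{X₀,…,X_j} α = ∇_{X₀}(∇^j_{X₁,…,X_j} α) − Σ_k ∇^j_{X₁,…,∇̂_{X₀}X_k,…,X_j} α`.
-/

open TensorProduct

variable {R : Type*} [CommRing R] [Algebra ℝ R]
variable {V : Type*} [AddCommGroup V] [Module R V]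

/-- The trivial connection on the trivial bundle `M × ℝ`, i.e. on `R = C^∞(M)`:
`∇_X f = X(f)`. -/
def trivialConn {R : Type*} [CommRing R] [Algebra ℝ R]
    {V : Type*} [AddCommGroup V] [Module R V] (D : VFAct R V) :
    Conn R V R D where
  d := D.act
  d_add_right := D.act_add_right
  d_smul_right := fun X f α => by
    simpa [smul_eq_mul] using D.act_mul_right X f α
  d_add_left := D.act_add_left
  d_smul_left := fun f X α => by
    simpa [smul_eq_mul] using D.act_smul_left f X α

/-- The normalized centered monomial `(e − p)^T / T!` determined by a multi-index
`T`, coordinate functions `e` and the point `p` given by the evaluation character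
`ev`. -/
noncomputable def centeredMonomial {R : Type*} [CommRing R] [Algebra ℝ R]
    {n : ℕ} (e : Fin n → R) (ev : R →ₐ[ℝ] ℝ) (T : Fin n → ℕ) : R :=
  algebraMap ℝ R (∏ i, ((T i).factorial : ℝ))⁻¹ *
    ∏ i, (e i - algebraMap ℝ R (ev (e i))) ^ (T i)



section Aux

variable {R : Type*} [CommRing R] [Algebra ℝ R]
variable {V : Type*} [AddCommGroup V] [Module R V]
variable {E : Type*} [AddCommGroup E] [Module R E]
variable {D : VFAct R V}

/-- `D.act X` as an additive monoid hom. -/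
def VFAct.actHom (D : VFAct R V) (X : V) : R →+ R :=
  AddMonoidHom.mk' (D.act X) (D.act_add_right X)

@[simp] lemma VFAct.actHom_apply (X : V) (f : R) : D.actHom X f = D.act X f := rfl

lemma VFAct.act_zero (X : V) : D.act X (0 : R) = 0 := by
  simpa using (D.actHom X).map_zero

lemma VFAct.act_sub (X : V) (f g : R) : D.act X (f - g) = D.act X f - D.act X g := by
  simpa using (D.actHom X).map_sub f g

lemma VFAct.act_one (X : V) : D.act X (1 : R) = 0 := by
  simpa using D.act_algebraMap X 1

/-- `c.d X` as an additive monoid hom. -/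
def Conn.dHom {D : VFAct R V} (c : Conn R V E D) (X : V) : E →+ E :=
  AddMonoidHom.mk' (c.d X) (c.d_add_right X)

@[simp] lemma Conn.dHom_apply (c : Conn R V E D) (X : V) (α : E) : c.dHom X α = c.d X α := rfl

lemma Conn.d_sub_right (c : Conn R V E D) (X : V) (α β : E) :
    c.d X (α - β) = c.d X α - c.d X β := by
  simpa using (c.dHom X).map_sub α β

/-- A derivation lowers the power of an ideal by one (ideal = kernel of a character). -/
lemma act_mem_pow (ev : R →ₐ[ℝ] ℝ) (X : V) :
    ∀ (k : ℕ) (f : R), f ∈ (RingHom.ker ev.toRingHom) ^ (k + 1) →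
      D.act X f ∈ (RingHom.ker ev.toRingHom) ^ k := by
  intro k
  induction k with
  | zero => intro f _; simpa [Ideal.one_eq_top] using Submodule.mem_top
  | succ k ih =>
      intro f hf
      rw [pow_succ] at hf
      refine Submodule.mul_induction_on hf ?_ ?_
      · intro m hm n hn
        rw [D.act_mul_right]
        refine Ideal.add_mem _ ?_ ?_
        · rw [pow_succ]; exact Ideal.mul_mem_mul (ih m hm) hn
        · exact Ideal.mul_mem_right _ _ hm
      · intro x y hx hy
        rw [D.act_add_right]; exact Ideal.add_mem _ hx hy

lemma d_mem_pow_smul (ev : R →ₐ[ℝ] ℝ) (cE : Conn R V E D) (X : V)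
    (k : ℕ) (β : E) (hβ : β ∈ ((RingHom.ker ev.toRingHom) ^ (k + 1)) • (⊤ : Submodule R E)) :
    cE.d X β ∈ ((RingHom.ker ev.toRingHom) ^ k) • (⊤ : Submodule R E) := by
  refine Submodule.smul_induction_on hβ ?_ ?_
  · intro r hr m _
    rw [cE.d_smul_right]
    refine Submodule.add_mem _ ?_ ?_
    · exact Submodule.smul_mem_smul (act_mem_pow ev X k r hr) Submodule.mem_top
    · exact Submodule.smul_mem_smul (Ideal.pow_le_pow_right (Nat.le_succ k) hr) Submodule.mem_top
  · intro x y hx hy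
    rw [cE.d_add_right]; exact Submodule.add_mem _ hx hy

end Aux
section Aux2

variable {R : Type*} [CommRing R] [Algebra ℝ R]
variable {V : Type*} [AddCommGroup V] [Module R V]
variable {E : Type*} [AddCommGroup E] [Module R E]
variable {D : VFAct R V}

lemma prod_pow_mem_pow_sum (I : Ideal R) {n : ℕ} (x : Fin n → R) (hx : ∀ i, x i ∈ I)
    (T : Fin n → ℕ) (s : Finset (Fin n)) :
    (∏ i ∈ s, x i ^ T i) ∈ I ^ (∑ i ∈ s, T i) := by
  classical
  induction s using Finset.induction with
  | empty => simp [Ideal.one_eq_top]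
  | insert a s hnotmem ih =>
      rw [Finset.prod_insert hnotmem, Finset.sum_insert hnotmem, pow_add]
      exact Ideal.mul_mem_mul (Ideal.pow_mem_pow (hx a) _) ih

lemma centeredMonomial_mem_pow {n : ℕ} (e : Fin n → R) (ev : R →ₐ[ℝ] ℝ) (T : Fin n → ℕ) :
    centeredMonomial e ev T ∈ (RingHom.ker ev.toRingHom) ^ (∑ i, T i) := by
  refine Ideal.mul_mem_left _ _ ?_
  refine prod_pow_mem_pow_sum _ _ (fun i => ?_) T Finset.univ
  simp [RingHom.mem_ker]

/-- Lemma A': higher covariant derivatives of the monomial stay in the right power. -/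
lemma hcd_triv_mem {D : VFAct R V} (cT : Conn R V V D) {n : ℕ} (e : Fin n → R)
    (ev : R →ₐ[ℝ] ℝ) (T : Fin n → ℕ) :
    ∀ (j : ℕ) (X : Fin j → V),
      hcd cT (trivialConn D) j X (centeredMonomial e ev T)
        ∈ (RingHom.ker ev.toRingHom) ^ (∑ i, T i - j) := by
  intro j
  induction j with
  | zero =>
      intro X
      simpa [hcd] using centeredMonomial_mem_pow e ev T
  | succ j ih =>
      intro X
      rw [hcd]
      by_cases h : ∑ i, T i ≤ j
      · have : (∑ i, T i) - (j + 1) = 0 := by omega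
        rw [this]
        simpa [Ideal.one_eq_top] using Submodule.mem_top
      · have hlt : j < ∑ i, T i := by omega
        refine Ideal.sub_mem _ ?_ ?_
        · have heq : ∑ i, T i - j = (∑ i, T i - (j + 1)) + 1 := by omega
          exact act_mem_pow ev (X 0) _ _ (heq ▸ ih _)
        · refine Submodule.sum_mem _ (fun k _ => ?_)
          exact Ideal.pow_le_pow_right (by omega) (ih _)

end Aux2
section Aux3

variable {R : Type*} [CommRing R] [Algebra ℝ R]
variable {V : Type*} [AddCommGroup V] [Module R V]
variable {D : VFAct R V}

lemma act_pow (X : V) (y : R) (k : ℕ) :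
    D.act X (y ^ k) = (k : R) * y ^ (k - 1) * D.act X y := by
  induction k with
  | zero => simp [VFAct.act_one]
  | succ k ih =>
      rw [pow_succ, D.act_mul_right, ih]
      cases k with
      | zero => simp
      | succ m =>
          simp only [Nat.add_sub_cancel]
          have h : ((m + 1 : ℕ) : R) * y ^ m * D.act X y * y
              = ((m + 1 : ℕ) : R) * y ^ (m + 1) * D.act X y := by
            rw [pow_succ]; ring
          rw [h]
          push_cast
          ring

lemma act_prod_zero (X : V) {ι : Type*} (s : Finset ι) (f : ι → R)
    (h : ∀ i ∈ s, D.act X (f i) = 0) : D.act X (∏ i ∈ s, f i) = 0 := by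
  classical
  induction s using Finset.induction with
  | empty => simp [VFAct.act_one]
  | insert a s hnotmem ih =>
      rw [Finset.prod_insert hnotmem, D.act_mul_right,
        h a (Finset.mem_insert_self a s), ih (fun i hi => h i (Finset.mem_insert_of_mem hi))]
      ring

lemma act_algebraMap_mul (X : V) (r : ℝ) (f : R) :
    D.act X (algebraMap ℝ R r * f) = algebraMap ℝ R r * D.act X f := by
  rw [D.act_mul_right, D.act_algebraMap]; ring

lemma prod_comp_update {M : Type*} [CommMonoid M] {n : ℕ} (g : Fin n → ℕ → M)
    (T : Fin n → ℕ) (i : Fin n) (m : ℕ) :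
    ∏ j, g j (Function.update T i m j) = g i m * ∏ j ∈ Finset.univ.erase i, g j (T j) := by
  classical
  have h : (fun j => g j (Function.update T i m j))
      = Function.update (fun j => g j (T j)) i (g i m) := by
    funext j
    by_cases hij : j = i
    · subst hij; simp
    · simp [Function.update_of_ne hij]
  rw [h, Finset.prod_update_of_mem (Finset.mem_univ i), ← Finset.erase_eq]

/-- The exact formula for the derivative of a centered monomial along a coordinate field. -/
lemma act_centeredMonomial {n : ℕ} (e : Fin n → R) (eV : Fin n → V)
    (hcoord : ∀ i j, D.act (eV i) (e j) = if i = j then 1 else 0)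
    (ev : R →ₐ[ℝ] ℝ) (i : Fin n) (T : Fin n → ℕ) :
    D.act (eV i) (centeredMonomial e ev T) =
      if T i = 0 then 0
      else centeredMonomial e ev (Function.update T i (T i - 1)) := by
  classical
  have hdy : ∀ j, D.act (eV i) (e j - algebraMap ℝ R (ev (e j))) = if i = j then 1 else 0 := by
    intro j
    rw [VFAct.act_sub, D.act_algebraMap, hcoord]
    ring
  have hprod : (∏ j, (e j - algebraMap ℝ R (ev (e j))) ^ T j)
      = (e i - algebraMap ℝ R (ev (e i))) ^ T i
        * ∏ j ∈ Finset.univ.erase i, (e j - algebraMap ℝ R (ev (e j))) ^ T j :=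
    (Finset.mul_prod_erase Finset.univ _ (Finset.mem_univ i)).symm
  have hrest : D.act (eV i)
      (∏ j ∈ Finset.univ.erase i, (e j - algebraMap ℝ R (ev (e j))) ^ T j) = 0 := by
    refine act_prod_zero _ _ _ (fun j hj => ?_)
    rw [act_pow, hdy]
    have : i ≠ j := fun h => (Finset.mem_erase.mp hj).1 h.symm
    simp [this]
  have hmain : D.act (eV i) (∏ j, (e j - algebraMap ℝ R (ev (e j))) ^ T j) =
      (T i : R) * (e i - algebraMap ℝ R (ev (e i))) ^ (T i - 1)
        * ∏ j ∈ Finset.univ.erase i, (e j - algebraMap ℝ R (ev (e j))) ^ T j := by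
    rw [hprod, D.act_mul_right, hrest, act_pow, hdy]
    simp
  rw [centeredMonomial, act_algebraMap_mul, hmain]
  by_cases h0 : T i = 0
  · simp [h0]
  · rw [if_neg h0, centeredMonomial]
    have hupd := prod_comp_update
      (fun (j : Fin n) (t : ℕ) => (e j - algebraMap ℝ R (ev (e j))) ^ t) T i (T i - 1)
    rw [hupd]
    have hconst : algebraMap ℝ R (∏ j, ((T j).factorial : ℝ))⁻¹ * (T i : R) =
        algebraMap ℝ R (∏ j, (((Function.update T i (T i - 1)) j).factorial : ℝ))⁻¹ := by
      have hc : (T i : R) = algebraMap ℝ R (T i : ℝ) := by simp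
      rw [hc, ← map_mul]
      congr 1
      have h1 : (∏ j, ((T j).factorial : ℝ)) =
          ((T i).factorial : ℝ) * ∏ j ∈ Finset.univ.erase i, ((T j).factorial : ℝ) :=
        (Finset.mul_prod_erase Finset.univ _ (Finset.mem_univ i)).symm
      have h2 := prod_comp_update (fun (_ : Fin n) (t : ℕ) => ((t.factorial : ℝ)))
        T i (T i - 1)
      rw [h1, h2]
      have hfact : ((T i).factorial : ℝ) = (T i : ℝ) * (((T i) - 1).factorial : ℝ) := by
        rw [← Nat.cast_mul, Nat.mul_factorial_pred h0]
      rw [hfact]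
      have hne1 : (T i : ℝ) ≠ 0 := Nat.cast_ne_zero.mpr h0
      have hne2 : (((T i) - 1).factorial : ℝ) ≠ 0 := Nat.cast_ne_zero.mpr (Nat.factorial_ne_zero _)
      have hne3 : (∏ j ∈ Finset.univ.erase i, ((T j).factorial : ℝ)) ≠ 0 :=
        Finset.prod_ne_zero_iff.mpr (fun j _ => Nat.cast_ne_zero.mpr (Nat.factorial_ne_zero _))
      field_simp
    rw [← hconst]
    ring

end Aux3
section Aux4

variable {R : Type*} [CommRing R] [Algebra ℝ R]
variable {V : Type*} [AddCommGroup V] [Module R V]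
variable {D : VFAct R V}

@[simp] lemma trivialConn_d (X : V) (f : R) : (trivialConn D).d X f = D.act X f := rfl

lemma ev_centeredMonomial {n : ℕ} (e : Fin n → R) (ev : R →ₐ[ℝ] ℝ) (T : Fin n → ℕ) :
    ev (centeredMonomial e ev T) = if (∀ i, T i = 0) then 1 else 0 := by
  classical
  rw [centeredMonomial, map_mul, map_prod]
  simp only [map_sub, map_pow, AlgHom.commutes, Algebra.algebraMap_self, RingHom.id_apply,
    sub_self]
  by_cases hall : ∀ i, T i = 0
  · rw [if_pos hall]
    simp [hall]
  · rw [if_neg hall]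
    push_neg at hall
    obtain ⟨i, hi⟩ := hall
    have hz : (∏ i, ((0:ℝ)) ^ T i) = 0 :=
      Finset.prod_eq_zero (Finset.mem_univ i) (zero_pow hi)
    rw [hz]
    ring

lemma ev_eq_of_sub_mem_pow (ev : R →ₐ[ℝ] ℝ) {f g : R} {k : ℕ}
    (h : f - g ∈ (RingHom.ker ev.toRingHom) ^ (k + 1)) : ev f = ev g := by
  have h1 : f - g ∈ RingHom.ker ev.toRingHom :=
    Ideal.pow_le_self (Nat.succ_ne_zero k) h
  have h2 : ev (f - g) = 0 := h1
  rw [map_sub, sub_eq_zero] at h2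
  exact h2

/-- Claim C: the higher derivative along coordinate fields of a centered monomial is
the centered monomial with decreased exponents, up to higher-order terms. -/
lemma claimC {n : ℕ} (cT : Conn R V V D) (e : Fin n → R) (eV : Fin n → V)
    (hcoord : ∀ i j, D.act (eV i) (e j) = if i = j then 1 else 0)
    (ev : R →ₐ[ℝ] ℝ) :
    ∀ (j : ℕ) (T : Fin n → ℕ), j ≤ ∑ i, T i → ∀ (S : Fin j → Fin n),
      hcd cT (trivialConn D) j (fun k => eV (S k)) (centeredMonomial e ev T)
        - (if (∀ i, (Finset.univ.filter fun k => S k = i).card ≤ T i)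
            then centeredMonomial e ev
              (fun i => T i - (Finset.univ.filter fun k => S k = i).card)
            else 0)
        ∈ (RingHom.ker ev.toRingHom) ^ (∑ i, T i - j + 1) := by
  classical
  intro j
  induction j with
  | zero =>
      intro T hT S
      have h1 : ∀ i : Fin n, (Finset.univ.filter fun k : Fin 0 => S k = i).card = 0 := by
        intro i; simp
      simp only [h1, hcd, Nat.sub_zero]
      rw [if_pos (fun i => Nat.zero_le _)]
      have : centeredMonomial e ev (fun i => T i) = centeredMonomial e ev T := rfl
      rw [this, sub_self]
      exact zero_mem _
  | succ j ih =>
      intro T hT S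
      set c : Fin n → ℕ := fun i => (Finset.univ.filter fun k : Fin j => S k.succ = i).card
        with hc
      have hcnt : ∀ i, (Finset.univ.filter fun k => S k = i).card
          = c i + (if S 0 = i then 1 else 0) := by
        intro i
        rw [hc]
        simp only
        rw [Finset.card_filter, Finset.card_filter, Fin.sum_univ_succ]
        omega
      set A := hcd cT (trivialConn D) j (fun k => eV (S k.succ)) (centeredMonomial e ev T)
        with hA
      set g' := (if (∀ i, c i ≤ T i)
          then centeredMonomial e ev (fun i => T i - c i) else 0) with hg'
      set g := (if (∀ i, (Finset.univ.filter fun k => S k = i).card ≤ T i)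
          then centeredMonomial e ev
            (fun i => T i - (Finset.univ.filter fun k => S k = i).card)
          else 0) with hg
      have hIH : A - g' ∈ (RingHom.ker ev.toRingHom) ^ (∑ i, T i - j + 1) :=
        ih T (by omega) (fun k => S k.succ)
      have hkey : D.act (eV (S 0)) g' = g := by
        by_cases h' : ∀ i, c i ≤ T i
        · rw [hg', if_pos h', act_centeredMonomial e eV hcoord ev]
          by_cases h0 : T (S 0) - c (S 0) = 0
          · rw [if_pos h0, hg, if_neg]
            intro hcon
            have := hcon (S 0)
            rw [hcnt (S 0), if_pos rfl] at this
            have := h' (S 0)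
            omega
          · rw [if_neg h0, hg, if_pos]
            · congr 1
              funext i
              by_cases hi : i = S 0
              · subst hi
                rw [Function.update_self, hcnt, if_pos rfl]
                omega
              · rw [Function.update_of_ne hi, hcnt, if_neg (fun h => hi h.symm)]
                omega
            · intro i
              rw [hcnt]
              by_cases hi : S 0 = i
              · subst hi
                rw [if_pos rfl]
                have := h' (S 0)
                omega
              · rw [if_neg hi]
                have := h' i
                omega
        · rw [hg', if_neg h', VFAct.act_zero, hg, if_neg]
          push_neg at h'
          obtain ⟨i, hi⟩ := h'
          intro hcon
          have := hcon i
          rw [hcnt] at this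
          omega
      rw [hcd]
      beta_reduce
      simp only [trivialConn_d]
      have hsplit : D.act (eV (S 0)) A
            - (∑ k : Fin j, hcd cT (trivialConn D) j
                (Function.update (fun m => eV (S m.succ)) k (cT.d (eV (S 0)) (eV (S k.succ))))
                (centeredMonomial e ev T))
            - g
          = D.act (eV (S 0)) (A - g')
            - (∑ k : Fin j, hcd cT (trivialConn D) j
                (Function.update (fun m => eV (S m.succ)) k (cT.d (eV (S 0)) (eV (S k.succ))))
                (centeredMonomial e ev T)) := by
        rw [VFAct.act_sub, hkey]
        ring
      rw [hsplit]
      refine Ideal.sub_mem _ ?_ ?_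
      · have heq : ∑ i, T i - j + 1 = (∑ i, T i - (j + 1) + 1) + 1 := by omega
        exact act_mem_pow ev _ _ _ (heq ▸ hIH)
      · refine Submodule.sum_mem _ (fun k _ => ?_)
        rw [show ∑ i, T i - (j + 1) + 1 = ∑ i, T i - j from by omega]
        exact hcd_triv_mem cT e ev T j _

end Aux4
section Aux5

variable {R : Type*} [CommRing R] [Algebra ℝ R]
variable {V : Type*} [AddCommGroup V] [Module R V]
variable {E : Type*} [AddCommGroup E] [Module R E]
variable {D : VFAct R V}

/-- Lemma B: the difference between the covariant derivative of `m • α` and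
`(∇^j m) • α` lies in a high power of the maximal ideal times everything. -/
lemma hcd_smul_diff (cT : Conn R V V D) (cE : Conn R V E D) {n : ℕ}
    (e : Fin n → R) (ev : R →ₐ[ℝ] ℝ) :
    ∀ (j : ℕ) (T : Fin n → ℕ), j ≤ ∑ i, T i → ∀ (X : Fin j → V) (α : E),
      hcd cT cE j X (centeredMonomial e ev T • α)
        - (hcd cT (trivialConn D) j X (centeredMonomial e ev T)) • α
        ∈ ((RingHom.ker ev.toRingHom) ^ (∑ i, T i - j + 1)) • (⊤ : Submodule R E) := by
  intro j
  induction j with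
  | zero =>
      intro T hT X α
      rw [show hcd cT cE 0 X (centeredMonomial e ev T • α) = centeredMonomial e ev T • α
          from rfl,
        show hcd cT (trivialConn D) 0 X (centeredMonomial e ev T) = centeredMonomial e ev T
          from rfl, sub_self]
      exact zero_mem _
  | succ j ih =>
      intro T hT X α
      rw [hcd, hcd]
      have hgoal_eq :
          cE.d (X 0) (hcd cT cE j (fun k => X k.succ) (centeredMonomial e ev T • α))
            - (∑ k : Fin j, hcd cT cE j
                (Function.update (fun m => X m.succ) k (cT.d (X 0) (X k.succ)))
                (centeredMonomial e ev T • α))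
            - ((trivialConn D).d (X 0)
                  (hcd cT (trivialConn D) j (fun k => X k.succ) (centeredMonomial e ev T))
                - ∑ k : Fin j, hcd cT (trivialConn D) j
                    (Function.update (fun m => X m.succ) k (cT.d (X 0) (X k.succ)))
                    (centeredMonomial e ev T)) • α
          = cE.d (X 0)
              (hcd cT cE j (fun k => X k.succ) (centeredMonomial e ev T • α)
                - (hcd cT (trivialConn D) j (fun k => X k.succ) (centeredMonomial e ev T)) • α)
            + (hcd cT (trivialConn D) j (fun k => X k.succ) (centeredMonomial e ev T))
                • (cE.d (X 0) α)
            - ∑ k : Fin j,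
                (hcd cT cE j
                    (Function.update (fun m => X m.succ) k (cT.d (X 0) (X k.succ)))
                    (centeredMonomial e ev T • α)
                  - (hcd cT (trivialConn D) j
                      (Function.update (fun m => X m.succ) k (cT.d (X 0) (X k.succ)))
                      (centeredMonomial e ev T)) • α) := by
        rw [Conn.d_sub_right, cE.d_smul_right, trivialConn_d, sub_smul, Finset.sum_smul,
          Finset.sum_sub_distrib]
        abel
      rw [hgoal_eq]
      refine Submodule.sub_mem _ (Submodule.add_mem _ ?_ ?_) ?_
      · have heq : ∑ i, T i - j + 1 = (∑ i, T i - (j + 1) + 1) + 1 := by omega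
        exact d_mem_pow_smul ev cE _ _ _ (heq ▸ ih T (by omega) _ α)
      · refine Submodule.smul_mem_smul ?_ Submodule.mem_top
        rw [show ∑ i, T i - (j + 1) + 1 = ∑ i, T i - j from by omega]
        exact hcd_triv_mem cT e ev T j _
      · refine Submodule.sum_mem _ (fun k _ => ?_)
        exact Submodule.smul_mono_left (Ideal.pow_le_pow_right (by omega))
          (ih T (by omega) _ α)

end Aux5
open scoped Classical in
theorem statement14'
    {R : Type*} [CommRing R] [Algebra ℝ R]
    {V : Type*} [AddCommGroup V] [Module R V]
    {E : Type*} [AddCommGroup E] [Module R E]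
    {D : VFAct R V} (cT : Conn R V V D) (cE : Conn R V E D)
    {n : ℕ} (e : Fin n → R) (eV : Fin n → V)
    (hcoord : ∀ i j, D.act (eV i) (e j) = if i = j then 1 else 0)
    (ev : R →ₐ[ℝ] ℝ) :
    ∀ (s : ℕ) (S : Fin s → Fin n) (T : Fin n → ℕ), s ≤ ∑ i, T i →
      (ev (hcd cT (trivialConn D) s (fun k => eV (S k)) (centeredMonomial e ev T)) =
        if (∀ i, T i = (Finset.univ.filter fun k => S k = i).card) then 1 else 0) ∧
      (∀ α : E,
        hcd cT cE s (fun k => eV (S k)) (centeredMonomial e ev T • α) -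
            (if (∀ i, T i = (Finset.univ.filter fun k => S k = i).card)
              then (1 : R) else 0) • α
          ∈ (RingHom.ker ev.toRingHom) • (⊤ : Submodule R E)) := by
  intro s S T hT
  have hC := claimC cT e eV hcoord ev s T hT S
  have hev_g : ev (if (∀ i, (Finset.univ.filter fun k => S k = i).card ≤ T i)
      then centeredMonomial e ev
        (fun i => T i - (Finset.univ.filter fun k => S k = i).card)
      else 0)
      = if (∀ i, T i = (Finset.univ.filter fun k => S k = i).card) then 1 else 0 := by
    by_cases hcond : ∀ i, T i = (Finset.univ.filter fun k => S k = i).card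
    · rw [if_pos (fun i => le_of_eq (hcond i).symm), ev_centeredMonomial,
        if_pos (fun i => Nat.sub_eq_zero_of_le (le_of_eq (hcond i))), if_pos hcond]
    · rw [if_neg hcond]
      by_cases hle : ∀ i, (Finset.univ.filter fun k => S k = i).card ≤ T i
      · rw [if_pos hle, ev_centeredMonomial, if_neg]
        push_neg at hcond
        obtain ⟨i, hi⟩ := hcond
        intro hcon
        have := hcon i
        have := hle i
        omega
      · rw [if_neg hle, map_zero]
  have hpart1 : ev (hcd cT (trivialConn D) s (fun k => eV (S k)) (centeredMonomial e ev T)) =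
      if (∀ i, T i = (Finset.univ.filter fun k => S k = i).card) then 1 else 0 := by
    rw [ev_eq_of_sub_mem_pow ev hC, hev_g]
  refine ⟨hpart1, fun α => ?_⟩
  have hB := hcd_smul_diff cT cE e ev s T hT (fun k => eV (S k)) α
  have h1 : hcd cT cE s (fun k => eV (S k)) (centeredMonomial e ev T • α) -
        (if (∀ i, T i = (Finset.univ.filter fun k => S k = i).card)
          then (1 : R) else 0) • α
      = (hcd cT cE s (fun k => eV (S k)) (centeredMonomial e ev T • α)
          - (hcd cT (trivialConn D) s (fun k => eV (S k)) (centeredMonomial e ev T)) • α)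
        + ((hcd cT (trivialConn D) s (fun k => eV (S k)) (centeredMonomial e ev T)
            - (if (∀ i, T i = (Finset.univ.filter fun k => S k = i).card)
              then (1 : R) else 0)) • α) := by
    rw [sub_smul]
    abel
  rw [h1]
  refine Submodule.add_mem _ ?_ ?_
  · exact Submodule.smul_mono_left (Ideal.pow_le_self (Nat.succ_ne_zero _)) hB
  · refine Submodule.smul_mem_smul ?_ Submodule.mem_top
    have hev0 : ev (hcd cT (trivialConn D) s (fun k => eV (S k)) (centeredMonomial e ev T)
        - (if (∀ i, T i = (Finset.univ.filter fun k => S k = i).card)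
          then (1 : R) else 0)) = 0 := by
      rw [map_sub, hpart1, apply_ite ev, map_one, map_zero, sub_self]
    exact hev0

open scoped Classical in
/-- Evaluation of higher covariant derivatives on centered
monomials.  Let `p ∈ M` (the evaluation character `ev`), `e` coordinate functions
with coordinate vector fields `eV` (so `eV i (e j) = δᵢⱼ`), `S` a word with letters in
`{1,…,n}` and `T` a multi-index with `|S| ≤ |T|`.  Then
`[∇̂^{|S|}_{e_S} ((e−p)^T / T!)]_p = δ_{⟨S⟩,T}`, where `⟨S⟩` counts the occurrences
of each letter in `S`; and more generally for a section `α ∈ C^∞(E)`,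
`[∇^{|S|}_{e_S} ((e−p)^T/T! • α)]_p = δ_{⟨S⟩,T} • α_p` (i.e. the difference vanishes
at `p`, which for a section means membership in `(ker ev) • C^∞(E)`). -/
theorem statement14
    {R : Type*} [CommRing R] [Algebra ℝ R]
    {V : Type*} [AddCommGroup V] [Module R V]
    {E : Type*} [AddCommGroup E] [Module R E]
    {D : VFAct R V} (cT : Conn R V V D) (cE : Conn R V E D)
    {n : ℕ} (e : Fin n → R) (eV : Fin n → V)
    (hcoord : ∀ i j, D.act (eV i) (e j) = if i = j then 1 else 0)
    (ev : R →ₐ[ℝ] ℝ) :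
    ∀ (s : ℕ) (S : Fin s → Fin n) (T : Fin n → ℕ), s ≤ ∑ i, T i →
      (ev (hcd cT (trivialConn D) s (fun k => eV (S k)) (centeredMonomial e ev T)) =
        if (∀ i, T i = (Finset.univ.filter fun k => S k = i).card) then 1 else 0) ∧
      (∀ α : E,
        hcd cT cE s (fun k => eV (S k)) (centeredMonomial e ev T • α) -
            (if (∀ i, T i = (Finset.univ.filter fun k => S k = i).card)
              then (1 : R) else 0) • α
          ∈ (RingHom.ker ev.toRingHom) • (⊤ : Submodule R E)) :=
  statement14' cT cE e eV hcoord ev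
end
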